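/- arXiv:2402.05637 — 3 statements merged into one kernel-verified Lean document; each statement's English description precedes it below -/
import Mathlib

section
/- Let D : V → V be k-strictly pseudo-contractive and P : V → V be θ-averaged, with k, θ ∈ (0,1] and k < 1 − θ. Then the composition D∘P is l-strictly pseudo-contractive with l = k(1−θ)/((1−θ) − kθ), and 0 ≤ l < 1. -/
/-!
Write `u = (x - P x) - (y - P y)` and `w = (x - D (P x)) - (y - D (P y))`, so that the residual
of `D` at `P x, P y` is `w - u`. Averagedness gives `‖P x - P y‖² ≤ ‖x - y‖² - (1-θ)/θ ‖u‖²`, and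
strict pseudo-contractivity of `D` adds `k ‖w - u‖²`. A weighted Young inequality
`k ‖w - u‖² ≤ l ‖w‖² + (1-θ)/θ ‖u‖²` then cancels the `u`-terms; the weights `l/k` and
`(1-θ)/(kθ)` are the conjugate pair (reciprocals summing to one) for which the `u`-coefficient is
exactly `(1-θ)/θ`.
-/

def IsStrictPseudoContractive {E : Type*} [SeminormedAddCommGroup E] (k : ℝ) (T : E → E) : Prop :=
  ∀ x y, ‖T x - T y‖ ^ 2 ≤ ‖x - y‖ ^ 2 + k * ‖(x - T x) - (y - T y)‖ ^ 2

theorem add_sq_le_mul_sq_add_mul_sq (s t : ℝ) {α β : ℝ} (hα : 0 < α) (hβ : 0 < β)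
    (h : α⁻¹ + β⁻¹ ≤ 1) : (s + t) ^ 2 ≤ α * s ^ 2 + β * t ^ 2 := by
  have hαβ : α + β ≤ α * β := by
    rwa [inv_add_inv hα.ne' hβ.ne', div_le_one (mul_pos hα hβ)] at h
  have hα1 : 1 < α := by
    by_contra! h'
    nlinarith
  -- `(α - 1) (β - 1) ≥ 1` makes `(α - 1) s² - 2 s t + (β - 1) t²` a nonnegative quadratic form
  nlinarith [sq_nonneg ((α - 1) * s - t), mul_nonneg (sub_pos.2 hα1).le (sq_nonneg t)]

theorem norm_sub_sq_le_mul_add_mul {E : Type*} [SeminormedAddGroup E] (a b : E) {α β : ℝ}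
    (hα : 0 < α) (hβ : 0 < β) (h : α⁻¹ + β⁻¹ ≤ 1) :
    ‖a - b‖ ^ 2 ≤ α * ‖a‖ ^ 2 + β * ‖b‖ ^ 2 :=
  (pow_le_pow_left₀ (norm_nonneg _) (norm_sub_le a b) 2).trans
    (add_sq_le_mul_sq_add_mul_sq _ _ hα hβ h)

section InnerProductSpace

variable {V : Type*} [NormedAddCommGroup V] [InnerProductSpace ℝ V]

theorem norm_one_sub_smul_add_smul_sq (a b : V) (θ : ℝ) :
    ‖(1 - θ) • a + θ • b‖ ^ 2
      = (1 - θ) * ‖a‖ ^ 2 + θ * ‖b‖ ^ 2 - θ * (1 - θ) * ‖a - b‖ ^ 2 := by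
  rw [norm_add_sq_real, norm_sub_sq_real, norm_smul, norm_smul, real_inner_smul_left,
    real_inner_smul_right, mul_pow, mul_pow, Real.norm_eq_abs, Real.norm_eq_abs, sq_abs, sq_abs]
  ring

theorem norm_sub_sq_le_of_averaged {N P : V → V} {θ : ℝ} (hθ : 0 < θ)
    (hN : ∀ x y, ‖N x - N y‖ ≤ ‖x - y‖) (hP : ∀ x, P x = (1 - θ) • x + θ • N x) (x y : V) :
    ‖P x - P y‖ ^ 2 ≤ ‖x - y‖ ^ 2 - (1 - θ) / θ * ‖(x - P x) - (y - P y)‖ ^ 2 := by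
  have hPxy : P x - P y = (1 - θ) • (x - y) + θ • (N x - N y) := by
    rw [hP, hP]; module
  have hres : (x - P x) - (y - P y) = θ • ((x - y) - (N x - N y)) := by
    rw [hP, hP]; module
  have hNsq : ‖N x - N y‖ ^ 2 ≤ ‖x - y‖ ^ 2 := pow_le_pow_left₀ (norm_nonneg _) (hN x y) 2
  rw [hPxy, hres, norm_one_sub_smul_add_smul_sq, norm_smul, mul_pow, Real.norm_eq_abs, sq_abs]
  have hcoef : (1 - θ) / θ * θ ^ 2 = θ * (1 - θ) := by field_simp
  nlinarith

end InnerProductSpace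

theorem strictPseudoContractive_comp_const_bounds {k θ : ℝ} (hk : 0 < k)
    (hkθ : k < 1 - θ) :
    0 ≤ k * (1 - θ) / ((1 - θ) - k * θ) ∧ k * (1 - θ) / ((1 - θ) - k * θ) < 1 := by
  have hc : 0 < (1 - θ) - k * θ := by nlinarith
  exact ⟨div_nonneg (by nlinarith) hc.le, (div_lt_one hc).2 (by nlinarith)⟩

theorem IsStrictPseudoContractive.comp_averaged {V : Type*} [NormedAddCommGroup V]
    [InnerProductSpace ℝ V] {D P N : V → V} {k θ : ℝ} (hD : IsStrictPseudoContractive k D)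
    (hk : 0 < k) (hθ : 0 < θ) (hkθ : k < 1 - θ) (hN : ∀ x y, ‖N x - N y‖ ≤ ‖x - y‖)
    (hP : ∀ x, P x = (1 - θ) • x + θ • N x) :
    IsStrictPseudoContractive (k * (1 - θ) / ((1 - θ) - k * θ)) (D ∘ P) := by
  have hc : 0 < (1 - θ) - k * θ := by nlinarith
  have hyoung (w u : V) :
      k * ‖w - u‖ ^ 2 ≤ k * (1 - θ) / ((1 - θ) - k * θ) * ‖w‖ ^ 2 + (1 - θ) / θ * ‖u‖ ^ 2 := by
    have hconj : ((1 - θ) / ((1 - θ) - k * θ))⁻¹ + ((1 - θ) / (k * θ))⁻¹ ≤ 1 := by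
      rw [inv_div, inv_div, ← add_div, sub_add_cancel, div_self (by linarith)]
    have h := norm_sub_sq_le_mul_add_mul w u (div_pos (by linarith) hc)
      (div_pos (by linarith) (mul_pos hk hθ)) hconj
    calc k * ‖w - u‖ ^ 2
        ≤ k * ((1 - θ) / ((1 - θ) - k * θ) * ‖w‖ ^ 2 + (1 - θ) / (k * θ) * ‖u‖ ^ 2) := by gcongr
      _ = _ := by field_simp
  intro x y
  simp only [Function.comp_apply]
  calc ‖D (P x) - D (P y)‖ ^ 2
      ≤ ‖P x - P y‖ ^ 2 + k * ‖(P x - D (P x)) - (P y - D (P y))‖ ^ 2 := hD _ _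
    _ ≤ (‖x - y‖ ^ 2 - (1 - θ) / θ * ‖(x - P x) - (y - P y)‖ ^ 2)
        + (k * (1 - θ) / ((1 - θ) - k * θ) * ‖(x - D (P x)) - (y - D (P y))‖ ^ 2
          + (1 - θ) / θ * ‖(x - P x) - (y - P y)‖ ^ 2) := by
      gcongr
      · exact norm_sub_sq_le_of_averaged hθ hN hP x y
      · have hsplit : (P x - D (P x)) - (P y - D (P y))
            = ((x - D (P x)) - (y - D (P y))) - ((x - P x) - (y - P y)) := by abel
        rw [hsplit]
        exact hyoung _ _
    _ = _ := by ring

theorem stmt_5_general {V : Type*} [NormedAddCommGroup V] [InnerProductSpace ℝ V]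
    (D P : V → V) (k θ : ℝ)
    (hk0 : 0 < k) (hθ0 : 0 < θ)
    (hkθ : k < 1 - θ)
    (hD : ∀ x y : V, ‖D x - D y‖ ^ 2 ≤ ‖x - y‖ ^ 2 + k * ‖(x - D x) - (y - D y)‖ ^ 2)
    (hP : ∃ N : V → V, (∀ x y : V, ‖N x - N y‖ ≤ ‖x - y‖) ∧
      ∀ x : V, P x = (1 - θ) • x + θ • N x) :
    (0 ≤ k * (1 - θ) / ((1 - θ) - k * θ) ∧ k * (1 - θ) / ((1 - θ) - k * θ) < 1) ∧
    ∀ x y : V, ‖D (P x) - D (P y)‖ ^ 2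
      ≤ ‖x - y‖ ^ 2 + (k * (1 - θ) / ((1 - θ) - k * θ)) *
          ‖(x - D (P x)) - (y - D (P y))‖ ^ 2 := by
  obtain ⟨N, hN, hPN⟩ := hP
  exact ⟨strictPseudoContractive_comp_const_bounds hk0 hkθ,
    IsStrictPseudoContractive.comp_averaged hD hk0 hθ0 hkθ hN hPN⟩

theorem stmt_5 {V : Type*} [NormedAddCommGroup V] [InnerProductSpace ℝ V]
    [CompleteSpace V] (D P : V → V) (k θ : ℝ)
    (hk0 : 0 < k) (hk1 : k ≤ 1) (hθ0 : 0 < θ) (hθ1 : θ ≤ 1)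
    (hkθ : k < 1 - θ)
    (hD : ∀ x y : V, ‖D x - D y‖ ^ 2 ≤ ‖x - y‖ ^ 2 + k * ‖(x - D x) - (y - D y)‖ ^ 2)
    (hP : ∃ N : V → V, (∀ x y : V, ‖N x - N y‖ ≤ ‖x - y‖) ∧
      ∀ x : V, P x = (1 - θ) • x + θ • N x) :
    (0 ≤ k * (1 - θ) / ((1 - θ) - k * θ) ∧ k * (1 - θ) / ((1 - θ) - k * θ) < 1) ∧
    ∀ x y : V, ‖D (P x) - D (P y)‖ ^ 2
      ≤ ‖x - y‖ ^ 2 + (k * (1 - θ) / ((1 - θ) - k * θ)) *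
          ‖(x - D (P x)) - (y - D (P y))‖ ^ 2 :=
  stmt_5_general D P k θ hk0 hθ0 hkθ hD hP
end

section
/- Let D : V → V be k-strictly pseudo-contractive and P : V → V be θ-averaged, with k, θ ∈ (0,1] and k = 1 − θ. Then D∘P is pseudo-contractive. -/
open scoped RealInnerProductSpace

private lemma key_convex {V : Type*} [NormedAddCommGroup V] [InnerProductSpace ℝ V]
    (θ : ℝ) (p q : V) :
    ‖(1 - θ) • p + θ • q‖ ^ 2
      = (1 - θ) * ‖p‖ ^ 2 + θ * ‖q‖ ^ 2 - θ * (1 - θ) * ‖p - q‖ ^ 2 := by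
  have h1 : ∀ r : V, ‖r‖ ^ 2 = ⟪r, r⟫ := fun r => (real_inner_self_eq_norm_sq r).symm
  simp only [h1, inner_add_left, inner_add_right, inner_smul_left, inner_smul_right,
    inner_sub_left, inner_sub_right, RCLike.conj_to_real, real_inner_comm p q]
  ring

private lemma key_expand {V : Type*} [NormedAddCommGroup V] [InnerProductSpace ℝ V]
    (c : ℝ) (p q : V) :
    ‖c • p + q‖ ^ 2 = c ^ 2 * ‖p‖ ^ 2 + 2 * c * ⟪p, q⟫ + ‖q‖ ^ 2 := by
  have h1 : ∀ r : V, ‖r‖ ^ 2 = ⟪r, r⟫ := fun r => (real_inner_self_eq_norm_sq r).symm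
  simp only [h1, inner_add_left, inner_add_right, inner_smul_left, inner_smul_right,
    RCLike.conj_to_real, real_inner_comm p q]
  ring

theorem stmt_6 {V : Type*} [NormedAddCommGroup V] [InnerProductSpace ℝ V]
    [CompleteSpace V] (D P : V → V) (k θ : ℝ)
    (hk0 : 0 < k) (hk1 : k ≤ 1) (hθ0 : 0 < θ) (hθ1 : θ ≤ 1)
    (hkθ : k = 1 - θ)
    (hD : ∀ x y : V, ‖D x - D y‖ ^ 2 ≤ ‖x - y‖ ^ 2 + k * ‖(x - D x) - (y - D y)‖ ^ 2)
    (hP : ∃ N : V → V, (∀ x y : V, ‖N x - N y‖ ≤ ‖x - y‖) ∧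
      ∀ x : V, P x = (1 - θ) • x + θ • N x) :
    ∀ x y : V, ‖D (P x) - D (P y)‖ ^ 2
      ≤ ‖x - y‖ ^ 2 + ‖(x - D (P x)) - (y - D (P y))‖ ^ 2 := by
  obtain ⟨N, hN, hPN⟩ := hP
  intro x y
  set a := x - y with ha
  set b := N x - N y with hb
  set d := D (P x) - D (P y) with hd
  have hN2 : ‖b‖ ^ 2 ≤ ‖a‖ ^ 2 := by
    have := hN x y
    nlinarith [norm_nonneg b, norm_nonneg a]
  have hu : P x - P y = (1 - θ) • a + θ • b := by
    rw [hPN x, hPN y, ha, hb]; module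
  have hud : P x - D (P x) - (P y - D (P y)) = (1 - θ) • (a - d) + θ • (b - d) := by
    have : P x - D (P x) - (P y - D (P y)) = (P x - P y) - d := by rw [hd]; abel
    rw [this, hu, hd]; module
  have hD' := hD (P x) (P y)
  rw [hu, hud, ← hd, key_convex θ a b, key_convex θ (a - d) (b - d),
    show a - d - (b - d) = a - b by abel] at hD'
  have hgoal : (x - D (P x)) - (y - D (P y)) = a - d := by rw [ha, hd]; abel
  rw [hgoal]
  -- key nonnegativity: ‖(1-θ)•(a-b) + (a-d)‖² ≥ 0
  have h5 : 0 ≤ (1 - θ) ^ 2 * ‖a - b‖ ^ 2 + 2 * (1 - θ) * ⟪a - b, a - d⟫ + ‖a - d‖ ^ 2 := by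
    rw [← key_expand (1 - θ) (a - b) (a - d)]
    positivity
  have hF : ‖b - d‖ ^ 2
      = ‖a - d‖ ^ 2 - 2 * ⟪a - b, a - d⟫ + ‖a - b‖ ^ 2 := by
    have h : b - d = (-1 : ℝ) • (a - b) + (a - d) := by module
    rw [h, key_expand (-1) (a - b) (a - d)]
    ring
  rw [hF, hkθ] at hD'
  ring_nf at hD'
  nlinarith [mul_nonneg hθ0.le h5, mul_nonneg hθ0.le (sub_nonneg.mpr hN2),
    sq_nonneg (‖a - b‖), norm_nonneg (a - b)]
end

section
/- If D : V → V is k-strictly pseudo-contractive with k ∈ [0,1) and γ-cocoercive map ∇G satisfies 0 ≤ λ ≤ 2γ and k ≤ 1 − λ/(2γ), then T = D ∘ (I − λ∇G) is Lipschitz and pseudo-contractive. -/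
open RealInnerProductSpace

private lemma expand_sq {V : Type*} [NormedAddCommGroup V] [InnerProductSpace ℝ V]
    (a d : V) (lam : ℝ) :
    ‖a - lam • d‖ ^ 2 = ‖a‖ ^ 2 - 2 * lam * ⟪a, d⟫ + lam ^ 2 * ‖d‖ ^ 2 := by
  rw [norm_sub_sq_real, real_inner_smul_right, norm_smul, mul_pow, Real.norm_eq_abs, sq_abs]
  ring

private lemma lip_aux {nb nu na k : ℝ} (hk0 : 0 ≤ k) (hk1 : k < 1) (hb : 0 ≤ nb)
    (hu : 0 ≤ nu) (hna : 0 ≤ na)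
    (h : nb ^ 2 ≤ nu ^ 2 + k * (nu + nb) ^ 2) (hua : nu ≤ na) :
    nb ≤ (1 + k) / (1 - k) * na := by
  have h1 : 0 < 1 - k := by linarith
  rw [div_mul_eq_mul_div, le_div_iff₀ h1]
  have hfac : ((1 - k) * nb - (1 + k) * nu) * (nb + nu) ≤ 0 := by nlinarith [h]
  have h2 : (1 - k) * nb ≤ (1 + k) * nu := by
    rcases eq_or_lt_of_le (add_nonneg hb hu) with hz | hp
    · have hb0 : nb = 0 := by linarith
      have hu0 : nu = 0 := by linarith
      rw [hb0, hu0]; ring_nf; positivity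
    · by_contra hc
      push_neg at hc
      nlinarith [mul_pos (by linarith : (0:ℝ) < (1 - k) * nb - (1 + k) * nu) hp]
  have h3 : (1 + k) * nu ≤ (1 + k) * na :=
    mul_le_mul_of_nonneg_left hua (by linarith)
  linarith

theorem stmt_17 {V : Type*} [NormedAddCommGroup V] [InnerProductSpace ℝ V]
    [CompleteSpace V] (D : V → V) (G' : V → V) (k γ lam : ℝ)
    (hk0 : 0 ≤ k) (hk1 : k < 1) (hγ : 0 < γ)
    (hlam0 : 0 ≤ lam) (hlam : lam ≤ 2 * γ) (hklam : k ≤ 1 - lam / (2 * γ))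
    (hD : ∀ x y : V, ‖D x - D y‖ ^ 2 ≤ ‖x - y‖ ^ 2 + k * ‖(x - D x) - (y - D y)‖ ^ 2)
    (hG : ∀ x y : V, γ * ‖G' x - G' y‖ ^ 2 ≤ ⟪x - y, G' x - G' y⟫) :
    (∃ L : ℝ, ∀ x y : V,
        ‖D (x - lam • G' x) - D (y - lam • G' y)‖ ≤ L * ‖x - y‖) ∧
    (∀ x y : V,
        ‖D (x - lam • G' x) - D (y - lam • G' y)‖ ^ 2
          ≤ ‖x - y‖ ^ 2 +
            ‖(x - D (x - lam • G' x)) - (y - D (y - lam • G' y))‖ ^ 2) := by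
  have h2γ : (0:ℝ) < 2 * γ := by linarith
  have hklam' : 2 * γ * k ≤ 2 * γ - lam := by
    have h := mul_le_mul_of_nonneg_left hklam (le_of_lt h2γ)
    rw [mul_sub, mul_one, mul_div_cancel₀ _ (ne_of_gt h2γ)] at h
    linarith
  -- common setup
  have key : ∀ x y : V,
      ((x - lam • G' x) - (y - lam • G' y)) = (x - y) - lam • (G' x - G' y) := by
    intro x y; rw [smul_sub]; abel
  have hnu : ∀ x y : V, ‖(x - lam • G' x) - (y - lam • G' y)‖ ≤ ‖x - y‖ := by
    intro x y
    have hd := hG x y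
    have h1 : ‖(x - lam • G' x) - (y - lam • G' y)‖ ^ 2
        = ‖x - y‖ ^ 2 - 2 * lam * ⟪x - y, G' x - G' y⟫ + lam ^ 2 * ‖G' x - G' y‖ ^ 2 := by
      rw [key x y, expand_sq]
    have h2 := mul_le_mul_of_nonneg_left hd hlam0
    nlinarith [norm_nonneg ((x - lam • G' x) - (y - lam • G' y)), norm_nonneg (x - y),
      mul_nonneg (mul_nonneg hlam0 (by linarith : (0:ℝ) ≤ 2 * γ - lam))
        (sq_nonneg ‖G' x - G' y‖)]
  constructor
  · refine ⟨(1 + k) / (1 - k), fun x y => ?_⟩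
    have hd := hD (x - lam • G' x) (y - lam • G' y)
    have hub : ‖((x - lam • G' x) - D (x - lam • G' x)) - ((y - lam • G' y) - D (y - lam • G' y))‖
        ≤ ‖(x - lam • G' x) - (y - lam • G' y)‖
          + ‖D (x - lam • G' x) - D (y - lam • G' y)‖ := by
      have : ((x - lam • G' x) - D (x - lam • G' x)) - ((y - lam • G' y) - D (y - lam • G' y))
          = ((x - lam • G' x) - (y - lam • G' y))
            - (D (x - lam • G' x) - D (y - lam • G' y)) := by abel
      rw [this]; exact norm_sub_le _ _
    refine lip_aux hk0 hk1 (norm_nonneg _) (norm_nonneg _) (norm_nonneg _) ?_ (hnu x y)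
    calc ‖D (x - lam • G' x) - D (y - lam • G' y)‖ ^ 2
        ≤ ‖(x - lam • G' x) - (y - lam • G' y)‖ ^ 2
          + k * ‖((x - lam • G' x) - D (x - lam • G' x))
              - ((y - lam • G' y) - D (y - lam • G' y))‖ ^ 2 := hd
      _ ≤ ‖(x - lam • G' x) - (y - lam • G' y)‖ ^ 2
          + k * (‖(x - lam • G' x) - (y - lam • G' y)‖
              + ‖D (x - lam • G' x) - D (y - lam • G' y)‖) ^ 2 := by
          have := sq_le_sq' (by nlinarith [norm_nonneg (((x - lam • G' x) - D (x - lam • G' x)) - ((y - lam • G' y) - D (y - lam • G' y))), norm_nonneg ((x - lam • G' x) - (y - lam • G' y)), norm_nonneg (D (x - lam • G' x) - D (y - lam • G' y))]) hub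
          nlinarith [mul_le_mul_of_nonneg_left this hk0]
  · intro x y
    set a := x - y with ha
    set d := G' x - G' y with hdd
    set b := D (x - lam • G' x) - D (y - lam • G' y) with hb
    set u := (x - lam • G' x) - (y - lam • G' y) with hu
    have hd' := hD (x - lam • G' x) (y - lam • G' y)
    have e1 : ((x - lam • G' x) - D (x - lam • G' x)) - ((y - lam • G' y) - D (y - lam • G' y))
        = u - b := by rw [hu, hb]; abel
    rw [e1] at hd'
    -- goal rewriting
    have e2 : (x - D (x - lam • G' x)) - (y - D (y - lam • G' y)) = a - b := by
      rw [ha, hb]; abel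
    rw [e2]
    have hue : u = a - lam • d := key x y
    have hu2 : ‖u‖ ^ 2 = ‖a‖ ^ 2 - 2 * lam * ⟪a, d⟫ + lam ^ 2 * ‖d‖ ^ 2 := by
      rw [hue, expand_sq]
    have hab : ‖a - b‖ ^ 2
        = ‖u - b‖ ^ 2 + 2 * lam * ⟪u - b, d⟫ + lam ^ 2 * ‖d‖ ^ 2 := by
      have : a - b = (u - b) + lam • d := by rw [hue]; abel
      rw [this, norm_add_sq_real, real_inner_smul_right, norm_smul, mul_pow,
        Real.norm_eq_abs, sq_abs]
      ring
    have hcs : -⟪u - b, d⟫ ≤ ‖u - b‖ * ‖d‖ := by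
      have h := real_inner_le_norm (b - u) d
      rw [show b - u = -(u - b) by abel, inner_neg_left, norm_neg] at h
      linarith
    have hGd : γ * ‖d‖ ^ 2 ≤ ⟪a, d⟫ := hG x y
    nlinarith [hd', hu2, hab,
      mul_le_mul_of_nonneg_left hGd hlam0,
      mul_le_mul_of_nonneg_left hcs hlam0,
      mul_nonneg hlam0 (sq_nonneg (2 * γ * ‖d‖ - ‖u - b‖)),
      mul_nonneg (by linarith : (0:ℝ) ≤ 2 * γ - lam - 2 * γ * k) (sq_nonneg ‖u - b‖)]
end
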